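/- arXiv:2111.07826 — 2 statements merged into one kernel-verified Lean document; each statement's English description precedes it below -/
import Mathlib

section
/- Every root λ of the cubic polynomial λ³ + 2νλ² + (1 + B₀² + ν²)λ + ν = 0 has negative real part whenever ν > 0. -/
/-!
A Routh–Hurwitz argument. Write a root of `z³ + a z² + b z + c` (real coefficients) as
`z = x + iy` with `x ≥ 0`. The imaginary part of the equation factors as
`y (3x² - y² + 2ax + b) = 0`. If `y = 0`, the real part `x³ + ax² + bx + c` is positive.
Otherwise `y² = 3x² + 2ax + b`, and substituting into the real part gives
`-8x³ - 8ax² - 2(a² + b)x + c - ab`, which is negative as soon as `c < ab`.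
For the theorem, `a = 2ν`, `b = 1 + B₀² + ν²`, `c = ν`, and `ν < 2ν (1 + B₀² + ν²)`.
-/

namespace Complex

variable (a b c : ℝ) (z : ℂ)

lemma re_cubic :
    (z ^ 3 + a * z ^ 2 + b * z + c).re =
      z.re ^ 3 - 3 * z.re * z.im ^ 2 + a * (z.re ^ 2 - z.im ^ 2) + b * z.re + c := by
  simp only [pow_succ, pow_zero, one_mul, add_re, mul_re, mul_im, ofReal_re, ofReal_im]
  ring

lemma im_cubic :
    (z ^ 3 + a * z ^ 2 + b * z + c).im =
      z.im * (3 * z.re ^ 2 - z.im ^ 2 + 2 * a * z.re + b) := by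
  simp only [pow_succ, pow_zero, one_mul, add_im, mul_re, mul_im, ofReal_re, ofReal_im]
  ring

variable {a b c z}

/-- The Routh–Hurwitz criterion for a real monic cubic. -/
theorem re_neg_of_cubic_eq_zero (ha : 0 < a) (hc : 0 < c) (habc : c < a * b)
    (hz : z ^ 3 + a * z ^ 2 + b * z + c = 0) : z.re < 0 := by
  have hb : 0 < b := pos_of_mul_pos_right (hc.trans habc) ha.le
  have hre := re_cubic a b c z
  have him := im_cubic a b c z
  rw [hz, zero_re] at hre
  rw [hz, zero_im] at him
  set x := z.re
  set y := z.im
  by_contra! hx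
  rcases mul_eq_zero.mp him.symm with hy | hy
  · rw [hy] at hre
    nlinarith [pow_nonneg hx 3, mul_nonneg ha.le (sq_nonneg x), mul_nonneg hb.le hx]
  · have hy2 : y ^ 2 = 3 * x ^ 2 + 2 * a * x + b := by linarith
    have hre' : 0 = -8 * x ^ 3 - 8 * a * x ^ 2 - 2 * (a ^ 2 + b) * x + (c - a * b) := by
      rw [hre, hy2]; ring
    nlinarith [pow_nonneg hx 3, mul_nonneg ha.le (sq_nonneg x),
      mul_nonneg (add_nonneg (sq_nonneg a) hb.le) hx]

end Complex

/-- Every root λ of λ³ + 2νλ² + (1 + B₀² + ν²)λ + ν = 0 has negative real part when ν > 0. -/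
theorem cubic_roots_neg_re (ν B₀ : ℝ) (hν : 0 < ν) (lam : ℂ)
    (hroot : lam ^ 3 + 2 * (ν : ℂ) * lam ^ 2 + ((1 : ℂ) + (B₀ : ℂ) ^ 2 + (ν : ℂ) ^ 2) * lam
      + (ν : ℂ) = 0) :
    lam.re < 0 := by
  refine Complex.re_neg_of_cubic_eq_zero (a := 2 * ν) (b := 1 + B₀ ^ 2 + ν ^ 2) (by positivity) hν
    ?_ (by push_cast; exact hroot)
  nlinarith [sq_nonneg B₀, sq_nonneg ν]
end

section
/- If (q₁, q₂, s) solves q₁' = -q₁² - s - B₀q₂ - νq₁, q₂' = -q₁q₂ + B₀q₁ - νq₂, s' = q₁(1 - s), and (Q, P₁, P₂, P₃) solves the linear system Q' = P₁, P₁' = -νP₁ - B₀P₂ - P₃, P₂' = B₀P₁ - νP₂, P₃' = P₁, with Q(0) = 1, (P₁, P₂, P₃)(0) = (q₁(0), q₂(0), s(0)), then on any interval containing 0 where Q ≠ 0 one has (q₁, q₂, s) = (P₁/Q, P₂/Q, P₃/Q). -/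
open Set Real

private lemma abs3_bound (a₁ a₂ a₃ u v w : ℝ) :
    |a₁ * u + a₂ * v + a₃ * w| ≤ |a₁| * |u| + |a₂| * |v| + |a₃| * |w| := by
  calc |a₁ * u + a₂ * v + a₃ * w| ≤ |a₁ * u + a₂ * v| + |a₃ * w| := abs_add_le _ _
    _ ≤ |a₁ * u| + |a₂ * v| + |a₃ * w| := by linarith [abs_add_le (a₁ * u) (a₂ * v)]
    _ = _ := by rw [abs_mul, abs_mul, abs_mul]

private lemma riccati_aux (ν B₀ : ℝ)
    (J : Set ℝ) (a b : ℝ) (ha : a ≤ 0) (hb : 0 ≤ b) (hsubJ : Icc a b ⊆ J)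
    (q₁ q₂ s Q P₁ P₂ P₃ : ℝ → ℝ)
    (hq₁ : ∀ t ∈ J, HasDerivAt q₁ (-(q₁ t) ^ 2 - s t - B₀ * q₂ t - ν * q₁ t) t)
    (hq₂ : ∀ t ∈ J, HasDerivAt q₂ (-(q₁ t) * q₂ t + B₀ * q₁ t - ν * q₂ t) t)
    (hs : ∀ t ∈ J, HasDerivAt s (q₁ t * (1 - s t)) t)
    (hQ : ∀ t ∈ J, HasDerivAt Q (P₁ t) t)
    (hP₁ : ∀ t ∈ J, HasDerivAt P₁ (-ν * P₁ t - B₀ * P₂ t - P₃ t) t)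
    (hP₂ : ∀ t ∈ J, HasDerivAt P₂ (B₀ * P₁ t - ν * P₂ t) t)
    (hP₃ : ∀ t ∈ J, HasDerivAt P₃ (P₁ t) t)
    (hQ0 : Q 0 = 1) (hP₁0 : P₁ 0 = q₁ 0) (hP₂0 : P₂ 0 = q₂ 0) (hP₃0 : P₃ 0 = s 0) :
    ∀ t ∈ Icc a b,
      P₁ t - q₁ t * Q t = 0 ∧ P₂ t - q₂ t * Q t = 0 ∧ P₃ t - s t * Q t = 0 := by
  have hab : a ≤ b := ha.trans hb
  have h0m : (0 : ℝ) ∈ Icc a b := ⟨ha, hb⟩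
  -- continuity of coefficients on the compact interval
  have hcq₁ : ContinuousOn q₁ (Icc a b) := fun τ hτ =>
    ((hq₁ τ (hsubJ hτ)).continuousAt).continuousWithinAt
  have hcq₂ : ContinuousOn q₂ (Icc a b) := fun τ hτ =>
    ((hq₂ τ (hsubJ hτ)).continuousAt).continuousWithinAt
  have hcs : ContinuousOn s (Icc a b) := fun τ hτ =>
    ((hs τ (hsubJ hτ)).continuousAt).continuousWithinAt
  obtain ⟨C₁, hC₁⟩ := isCompact_Icc.exists_bound_of_continuousOn hcq₁
  obtain ⟨C₂, hC₂⟩ := isCompact_Icc.exists_bound_of_continuousOn hcq₂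
  obtain ⟨C₃, hC₃⟩ := isCompact_Icc.exists_bound_of_continuousOn hcs
  have hC₁0 : 0 ≤ C₁ := (norm_nonneg _).trans (hC₁ 0 h0m)
  have hC₂0 : 0 ≤ C₂ := (norm_nonneg _).trans (hC₂ 0 h0m)
  have hC₃0 : 0 ≤ C₃ := (norm_nonneg _).trans (hC₃ 0 h0m)
  -- clamp
  set c : ℝ → ℝ := fun τ => max a (min b τ) with hc
  have hcmem : ∀ τ, c τ ∈ Icc a b := fun τ =>
    ⟨le_max_left _ _, max_le hab (min_le_left _ _)⟩
  have hceq : ∀ τ ∈ Icc a b, c τ = τ := by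
    intro τ hτ
    simp only [hc]
    rw [min_eq_right hτ.2, max_eq_right hτ.1]
  -- the vector field
  set v : ℝ → (ℝ × ℝ × ℝ) → (ℝ × ℝ × ℝ) := fun τ x =>
    ((-ν - q₁ (c τ)) * x.1 + (-B₀) * x.2.1 + (-1) * x.2.2,
      ((B₀ - q₂ (c τ)) * x.1 + (-ν) * x.2.1 + 0 * x.2.2,
        (1 - s (c τ)) * x.1 + 0 * x.2.1 + 0 * x.2.2)) with hv_def
  set K : NNReal := ⟨|ν| + |B₀| + 1 + C₁ + C₂ + C₃ + 1, by
    have := abs_nonneg ν; have := abs_nonneg B₀; linarith⟩ with hK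
  have hKcoe : (K : ℝ) = |ν| + |B₀| + 1 + C₁ + C₂ + C₃ + 1 := rfl
  have hvlip : ∀ τ, LipschitzWith K (v τ) := by
    intro τ
    apply LipschitzWith.of_dist_le_mul
    intro x y
    have hd1 : dist x.1 y.1 ≤ dist x y := by
      rw [Prod.dist_eq]; exact le_max_left _ _
    have hd2 : dist x.2.1 y.2.1 ≤ dist x y := by
      rw [Prod.dist_eq, Prod.dist_eq]
      exact le_trans (le_max_left _ _) (le_max_right _ _)
    have hd3 : dist x.2.2 y.2.2 ≤ dist x y := by
      rw [Prod.dist_eq, Prod.dist_eq]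
      exact le_trans (le_max_right _ _) (le_max_right _ _)
    have hDnn : 0 ≤ dist x y := dist_nonneg
    have key : ∀ a₁ a₂ a₃ : ℝ,
        dist (a₁ * x.1 + a₂ * x.2.1 + a₃ * x.2.2) (a₁ * y.1 + a₂ * y.2.1 + a₃ * y.2.2)
          ≤ (|a₁| + |a₂| + |a₃|) * dist x y := by
      intro a₁ a₂ a₃
      rw [Real.dist_eq]
      have : (a₁ * x.1 + a₂ * x.2.1 + a₃ * x.2.2) - (a₁ * y.1 + a₂ * y.2.1 + a₃ * y.2.2)
          = a₁ * (x.1 - y.1) + a₂ * (x.2.1 - y.2.1) + a₃ * (x.2.2 - y.2.2) := by ring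
      rw [this]
      refine (abs3_bound _ _ _ _ _ _).trans ?_
      rw [← Real.dist_eq, ← Real.dist_eq, ← Real.dist_eq]
      have b1 : |a₁| * dist x.1 y.1 ≤ |a₁| * dist x y :=
        mul_le_mul_of_nonneg_left hd1 (abs_nonneg _)
      have b2 : |a₂| * dist x.2.1 y.2.1 ≤ |a₂| * dist x y :=
        mul_le_mul_of_nonneg_left hd2 (abs_nonneg _)
      have b3 : |a₃| * dist x.2.2 y.2.2 ≤ |a₃| * dist x y :=
        mul_le_mul_of_nonneg_left hd3 (abs_nonneg _)
      nlinarith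
    have hq₁b : |q₁ (c τ)| ≤ C₁ := hC₁ _ (hcmem τ)
    have hq₂b : |q₂ (c τ)| ≤ C₂ := hC₂ _ (hcmem τ)
    have hsb : |s (c τ)| ≤ C₃ := hC₃ _ (hcmem τ)
    have e1 : |(-ν - q₁ (c τ))| + |(-B₀)| + |(-1 : ℝ)| ≤ (K : ℝ) := by
      rw [hKcoe]
      have := (abs_sub _ _ : |(-ν) - q₁ (c τ)| ≤ |(-ν)| + |q₁ (c τ)|)
      simp only [abs_neg, abs_one] at *
      linarith
    have e2 : |(B₀ - q₂ (c τ))| + |(-ν)| + |(0 : ℝ)| ≤ (K : ℝ) := by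
      rw [hKcoe]
      have := (abs_sub B₀ (q₂ (c τ)) : |B₀ - q₂ (c τ)| ≤ |B₀| + |q₂ (c τ)|)
      simp only [abs_neg, abs_zero] at *
      linarith
    have e3 : |(1 - s (c τ))| + |(0 : ℝ)| + |(0 : ℝ)| ≤ (K : ℝ) := by
      rw [hKcoe]
      have := (abs_sub (1 : ℝ) (s (c τ)) : |(1 : ℝ) - s (c τ)| ≤ |(1 : ℝ)| + |s (c τ)|)
      have := abs_nonneg ν
      have := abs_nonneg B₀
      simp only [abs_one, abs_zero] at *
      linarith
    rw [Prod.dist_eq, Prod.dist_eq]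
    refine max_le ?_ (max_le ?_ ?_)
    · exact (key _ _ _).trans (mul_le_mul_of_nonneg_right e1 hDnn)
    · exact (key _ _ _).trans (mul_le_mul_of_nonneg_right e2 hDnn)
    · exact (key _ _ _).trans (mul_le_mul_of_nonneg_right e3 hDnn)
  -- the difference function
  set f : ℝ → ℝ × ℝ × ℝ := fun τ =>
    (P₁ τ - q₁ τ * Q τ, (P₂ τ - q₂ τ * Q τ, P₃ τ - s τ * Q τ)) with hf_def
  have hf' : ∀ τ ∈ Icc a b, HasDerivAt f (v τ (f τ)) τ := by
    intro τ hτ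
    have hτJ : τ ∈ J := hsubJ hτ
    have d1 : HasDerivAt (fun τ => P₁ τ - q₁ τ * Q τ)
        ((-ν * P₁ τ - B₀ * P₂ τ - P₃ τ) -
          ((-(q₁ τ) ^ 2 - s τ - B₀ * q₂ τ - ν * q₁ τ) * Q τ + q₁ τ * P₁ τ)) τ :=
      (hP₁ τ hτJ).sub ((hq₁ τ hτJ).mul (hQ τ hτJ))
    have d2 : HasDerivAt (fun τ => P₂ τ - q₂ τ * Q τ)
        ((B₀ * P₁ τ - ν * P₂ τ) -
          ((-(q₁ τ) * q₂ τ + B₀ * q₁ τ - ν * q₂ τ) * Q τ + q₂ τ * P₁ τ)) τ :=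
      (hP₂ τ hτJ).sub ((hq₂ τ hτJ).mul (hQ τ hτJ))
    have d3 : HasDerivAt (fun τ => P₃ τ - s τ * Q τ)
        (P₁ τ - (q₁ τ * (1 - s τ) * Q τ + s τ * P₁ τ)) τ :=
      (hP₃ τ hτJ).sub ((hs τ hτJ).mul (hQ τ hτJ))
    have := d1.prodMk (d2.prodMk d3)
    convert this using 1
    simp only [hv_def, hf_def, hceq τ hτ]
    refine Prod.ext ?_ (Prod.ext ?_ ?_) <;> simp <;> ring
  have hg' : ∀ τ, HasDerivAt (fun _ : ℝ => ((0 : ℝ), ((0 : ℝ), (0 : ℝ))))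
      (v τ ((0 : ℝ), ((0 : ℝ), (0 : ℝ)))) τ := by
    intro τ
    have : v τ ((0 : ℝ), ((0 : ℝ), (0 : ℝ))) = ((0 : ℝ), ((0 : ℝ), (0 : ℝ))) := by
      simp [hv_def]
    rw [this]
    exact hasDerivAt_const _ _
  have hf0 : f 0 = ((0 : ℝ), ((0 : ℝ), (0 : ℝ))) := by
    simp only [hf_def, hQ0, hP₁0, hP₂0, hP₃0]
    norm_num
  have hvlip' : ∀ τ, LipschitzOnWith K (v τ) univ := fun τ => (hvlip τ).lipschitzOnWith
  have hleft : EqOn f (fun _ => ((0 : ℝ), ((0 : ℝ), (0 : ℝ)))) (Icc a 0) := by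
    apply ODE_solution_unique_of_mem_Icc_left (fun τ _ => hvlip' τ)
    · exact fun τ hτ => (hf' τ ⟨hτ.1, hτ.2.trans hb⟩).continuousAt.continuousWithinAt
    · exact fun τ hτ => (hf' τ ⟨hτ.1.le, hτ.2.trans hb⟩).hasDerivWithinAt
    · exact fun τ _ => mem_univ _
    · exact continuousOn_const
    · exact fun τ _ => (hg' τ).hasDerivWithinAt
    · exact fun τ _ => mem_univ _
    · exact hf0
  have hright : EqOn f (fun _ => ((0 : ℝ), ((0 : ℝ), (0 : ℝ)))) (Icc 0 b) := by
    apply ODE_solution_unique_of_mem_Icc_right (fun τ _ => hvlip' τ)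
    · exact fun τ hτ => (hf' τ ⟨ha.trans hτ.1, hτ.2⟩).continuousAt.continuousWithinAt
    · exact fun τ hτ => (hf' τ ⟨ha.trans hτ.1, hτ.2.le⟩).hasDerivWithinAt
    · exact fun τ _ => mem_univ _
    · exact continuousOn_const
    · exact fun τ _ => (hg' τ).hasDerivWithinAt
    · exact fun τ _ => mem_univ _
    · exact hf0
  intro t ht
  have hft : f t = ((0 : ℝ), ((0 : ℝ), (0 : ℝ))) := by
    rcases le_total t 0 with h | h
    · exact hleft ⟨ht.1, h⟩
    · exact hright ⟨h, ht.2⟩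
  have h1 := congrArg Prod.fst hft
  have h2 := congrArg (fun p => p.2.1) hft
  have h3 := congrArg (fun p => p.2.2) hft
  simp only [hf_def] at h1 h2 h3
  exact ⟨h1, h2, h3⟩

/-- If (q₁, q₂, s) solves the Riccati system and (Q, P₁, P₂, P₃) solves its Radon
linearization with matching initial data and Q ≠ 0 on an interval J containing 0,
then qᵢ = Pᵢ/Q and s = P₃/Q on J. -/
theorem riccati_eq_radon_quotient (ν B₀ : ℝ)
    (J : Set ℝ) (hJ : J.OrdConnected) (h0 : (0 : ℝ) ∈ J)
    (q₁ q₂ s Q P₁ P₂ P₃ : ℝ → ℝ)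
    (hq₁ : ∀ t ∈ J, HasDerivAt q₁ (-(q₁ t) ^ 2 - s t - B₀ * q₂ t - ν * q₁ t) t)
    (hq₂ : ∀ t ∈ J, HasDerivAt q₂ (-(q₁ t) * q₂ t + B₀ * q₁ t - ν * q₂ t) t)
    (hs : ∀ t ∈ J, HasDerivAt s (q₁ t * (1 - s t)) t)
    (hQ : ∀ t ∈ J, HasDerivAt Q (P₁ t) t)
    (hP₁ : ∀ t ∈ J, HasDerivAt P₁ (-ν * P₁ t - B₀ * P₂ t - P₃ t) t)
    (hP₂ : ∀ t ∈ J, HasDerivAt P₂ (B₀ * P₁ t - ν * P₂ t) t)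
    (hP₃ : ∀ t ∈ J, HasDerivAt P₃ (P₁ t) t)
    (hQ0 : Q 0 = 1) (hP₁0 : P₁ 0 = q₁ 0) (hP₂0 : P₂ 0 = q₂ 0) (hP₃0 : P₃ 0 = s 0)
    (hQne : ∀ t ∈ J, Q t ≠ 0) :
    ∀ t ∈ J, q₁ t = P₁ t / Q t ∧ q₂ t = P₂ t / Q t ∧ s t = P₃ t / Q t := by
  intro t ht
  have hsubJ : Icc (min 0 t) (max 0 t) ⊆ J := hJ.uIcc_subset h0 ht
  have htm : t ∈ Icc (min 0 t) (max 0 t) := ⟨min_le_right _ _, le_max_right _ _⟩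
  obtain ⟨h1, h2, h3⟩ := riccati_aux ν B₀ J (min 0 t) (max 0 t)
    (min_le_left _ _) (le_max_left _ _) hsubJ q₁ q₂ s Q P₁ P₂ P₃
    hq₁ hq₂ hs hQ hP₁ hP₂ hP₃ hQ0 hP₁0 hP₂0 hP₃0 t htm
  have hQt := hQne t ht
  refine ⟨?_, ?_, ?_⟩ <;> rw [eq_div_iff hQt] <;> linarith
end
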